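/- arXiv:2512.01536 — 2 statements merged into one kernel-verified Lean document; each statement's English description precedes it below -/
import Mathlib

section
/- In the group Gcal = ℝˣ ⋉ ℝ with multiplication (g₁,v₁)(g₂,v₂) = (g₁g₂, v₁g₂ + v₂), the maps α_g(h) = (g h⁻¹ − g + 1)⁻¹ and β_h(g) = (h g⁻¹ − h + 1)⁻¹ (defined where the denominators are nonzero) satisfy the matched pair identities: α_{g'g}(h) = α_{g'}(α_g(h)), β_{h'h}(g) = β_{h'}(β_h(g)), β_h(g'g) = β_{α_g(h)}(g')β_h(g), and α_g(h'h) = α_{β_h(g)}(h')α_g(h), whenever all expressions are defined. -/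
/-- The dressing action α_g(h) = (g h⁻¹ − g + 1)⁻¹ on ℝˣ. -/
noncomputable def axbAlpha (g h : ℝ) : ℝ := (g * h⁻¹ - g + 1)⁻¹

/-- The dressing action β_h(g) = (h g⁻¹ − h + 1)⁻¹ on ℝˣ. -/
noncomputable def axbBeta (h g : ℝ) : ℝ := (h * g⁻¹ - h + 1)⁻¹

/-- In Gcal = ℝˣ ⋉ ℝ, the maps α and β satisfy the matched pair
identities wherever all expressions are defined. -/
theorem stmt4 (g g' h h' : ℝ)
    (hg : g ≠ 0) (hg' : g' ≠ 0) (hh : h ≠ 0) (hh' : h' ≠ 0)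
    (d1 : g * h⁻¹ - g + 1 ≠ 0)
    (d2 : g' * (axbAlpha g h)⁻¹ - g' + 1 ≠ 0)
    (d3 : g' * g * h⁻¹ - g' * g + 1 ≠ 0)
    (d4 : h * g⁻¹ - h + 1 ≠ 0)
    (d5 : h' * (axbBeta h g)⁻¹ - h' + 1 ≠ 0)
    (d6 : h' * h * g⁻¹ - h' * h + 1 ≠ 0)
    (d7 : h * (g' * g)⁻¹ - h + 1 ≠ 0)
    (d8 : axbAlpha g h * g'⁻¹ - axbAlpha g h + 1 ≠ 0)
    (d9 : g * (h' * h)⁻¹ - g + 1 ≠ 0)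
    (d10 : axbBeta h g * h'⁻¹ - axbBeta h g + 1 ≠ 0) :
    axbAlpha (g' * g) h = axbAlpha g' (axbAlpha g h) ∧
    axbBeta (h' * h) g = axbBeta h' (axbBeta h g) ∧
    axbBeta h (g' * g) = axbBeta (axbAlpha g h) g' * axbBeta h g ∧
    axbAlpha g (h' * h) = axbAlpha (axbBeta h g) h' * axbAlpha g h := by
  have e1 : g - g * h + h ≠ 0 := by
    intro H; apply d1
    field_simp
    linear_combination H
  have e3 : g' * g - g' * g * h + h ≠ 0 := by
    intro H; apply d3
    field_simp
    linear_combination H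
  have e6 : g - g * h' * h + h' * h ≠ 0 := by
    intro H; apply d6
    field_simp
    linear_combination H
  have Ad : g * h⁻¹ - g + 1 = (g - g * h + h) / h := by field_simp
  have Bd : h * g⁻¹ - h + 1 = (g - g * h + h) / g := by field_simp; ring
  have Ah : axbAlpha g h = h / (g - g * h + h) := by
    rw [axbAlpha, Ad, inv_div]
  have Bg : axbBeta h g = g / (g - g * h + h) := by
    rw [axbBeta, Bd, inv_div]
  refine ⟨?_, ?_, ?_, ?_⟩
  · rw [axbAlpha, axbAlpha, Ah]
    rw [inv_inj]
    field_simp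
    ring
  · rw [axbBeta, axbBeta, Bg]
    rw [inv_inj]
    field_simp
    ring
  · rw [axbBeta, axbBeta, axbBeta, Ah]
    rw [← mul_inv, inv_inj]
    have e1' : g * (1 - h) + h ≠ 0 := by intro H; apply e1; linear_combination H
    field_simp
    ring
  · rw [axbAlpha, axbAlpha, axbAlpha, Bg]
    rw [← mul_inv, inv_inj]
    have e1' : h * (1 - g) + g ≠ 0 := by intro H; apply e1; linear_combination H
    have e1'' : g * (1 - h) + h ≠ 0 := by intro H; apply e1; linear_combination H
    field_simp
    ring
end

section
/- In the 3-dimensional group Hcal = (ℝ ⋊ ℝˣ) ⋉ ℝ with multiplication (z₁,x₁,w₁)(z₂,x₂,w₂) = (z₁ + x₁z₂, x₁x₂, w₁x₂ + w₂), the map ι : ℝ ⋊ ℝˣ → D := ℝ² ⋊ ℝˣ given by ι(z,x) = (x−1, z + x log|x|, x) is an injective group homomorphism, where D has multiplication ((ξ₁,ξ₂),g)((ξ₁',ξ₂'),g') = ((ξ₁,ξ₂) + ρ̂_g(ξ₁',ξ₂'), gg') with ρ̂_g(ξ₁,ξ₂) = (gξ₁, gξ₂ + ξ₁ g log|g|).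 -/
/-- The action ρ̂_g(ξ₁,ξ₂) = (gξ₁, gξ₂ + ξ₁ g log|g|) of ℝˣ on ℝ². -/
noncomputable def rhoHat16 (g : ℝ) (ξ : ℝ × ℝ) : ℝ × ℝ :=
  (g * ξ.1, g * ξ.2 + ξ.1 * g * Real.log |g|)

/-- Multiplication of D = ℝ² ⋊ ℝˣ: ((ξ,g))((ξ',g')) = (ξ + ρ̂_g ξ', g g'). -/
noncomputable def dMul16 (p q : (ℝ × ℝ) × ℝ) : (ℝ × ℝ) × ℝ :=
  (p.1 + rhoHat16 p.2 q.1, p.2 * q.2)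

/-- The map ι(z,x) = ((x−1, z + x log|x|), x). -/
noncomputable def iota16 (z x : ℝ) : (ℝ × ℝ) × ℝ :=
  ((x - 1, z + x * Real.log |x|), x)

/-- ι : ℝ ⋊ ℝˣ → D = ℝ² ⋊ ℝˣ, ι(z,x) = (x−1, z + x log|x|, x),
is an injective group homomorphism, where ℝ ⋊ ℝˣ has product
(z₁,x₁)(z₂,x₂) = (z₁ + x₁z₂, x₁x₂) and D has the semidirect product
multiplication for ρ̂_g(ξ₁,ξ₂) = (gξ₁, gξ₂ + ξ₁ g log|g|). -/
theorem stmt16 :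
    (∀ z₁ x₁ z₂ x₂ : ℝ, x₁ ≠ 0 → x₂ ≠ 0 →
      iota16 (z₁ + x₁ * z₂) (x₁ * x₂) = dMul16 (iota16 z₁ x₁) (iota16 z₂ x₂)) ∧
    (∀ z x z' x' : ℝ, iota16 z x = iota16 z' x' → z = z' ∧ x = x') := by
  constructor
  · intro z₁ x₁ z₂ x₂ h₁ h₂
    have hlog : Real.log |x₁ * x₂| = Real.log |x₁| + Real.log |x₂| := by
      rw [abs_mul]
      exact Real.log_mul (abs_ne_zero.mpr h₁) (abs_ne_zero.mpr h₂)
    simp only [iota16, dMul16, rhoHat16, Prod.mk.injEq, Prod.ext_iff, Prod.fst_add,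
      Prod.snd_add, hlog]
    constructor
    · constructor <;> ring
    · trivial
  · intro z x z' x' h
    simp only [iota16, Prod.mk.injEq] at h
    obtain ⟨⟨h1, h2⟩, h3⟩ := h
    subst h3
    exact ⟨by linarith, rfl⟩
end
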